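/- arXiv:2203.14946 — 2 statements merged into one kernel-verified Lean document; each statement's English description precedes it below -/
import Mathlib

section
/- Let k be a field of characteristic p > 0 and E an elementary abelian p-group of rank r viewed inside the torus T = (S^1)^r via p-th roots of unity. Then the restriction map H^*(BT; k) → H^*(BE; k) is an F-isomorphism, i.e., its kernel consists of nilpotent elements and every element of the target has a p^n-th power in the image. -/
open TensorProduct

/-- An *F-isomorphism* (at the prime `p`) of rings: a ring homomorphism whose kernel
consists of nilpotent elements and such that every element of the target has some
`p^n`-th power in the image. -/
def IsFIsomorphism (p : ℕ) {A B : Type*} [Semiring A] [Semiring B] (f : A →+* B) : Prop :=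
  (∀ a : A, f a = 0 → IsNilpotent a) ∧ ∀ b : B, ∃ n : ℕ, b ^ (p ^ n) ∈ Set.range f

/-!
For `p = 2` the map is `expand 2`, which is injective, and every `f` satisfies
`f ^ 2 = expand 2 (map (frobenius k 2) f)`.

For `p` odd, the kernel of the augmentation `ε` of the exterior algebra of an `r`-dimensional space
lies in the span of the positive exterior powers, and `⋀^n = 0` for `n > r`, so
`(ker ε) ^ (r + 1) = 0`. The retraction `ρ = ε ⊗ id : Λ ⊗ P → P` of `P → Λ ⊗ P` writes
each `x` as `1 ⊗ ρ x` plus an element of the ideal `ker ε ⊗ P`, which is again nilpotent.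
Since `1 ⊗ ρ x` is central, the `p ^ (r + 1)`-th power of `x` is that of `1 ⊗ ρ x`.
-/

namespace MvPolynomial

theorem isFIsomorphism_expand {σ R : Type*} [CommSemiring R] (p : ℕ) [ExpChar R p] :
    IsFIsomorphism p
      ((expand p : MvPolynomial σ R →ₐ[R] MvPolynomial σ R) :
        MvPolynomial σ R →+* MvPolynomial σ R) := by
  refine ⟨fun f hf => ?_, fun f => ⟨1, map (frobenius R p) f, ?_⟩⟩
  · rw [(expand_eq_zero (expChar_pos R p)).mp hf]
    exact IsNilpotent.zero
  · simp [← map_expand, map_frobenius_expand]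

end MvPolynomial

section GradedMonoid

variable {R A : Type*} [CommSemiring R] [Semiring A] [Algebra R A]
  (𝒜 : ℕ → Submodule R A) [SetLike.GradedMonoid 𝒜]

theorem iSup_graded_succ_pow_le (m : ℕ) : (⨆ i, 𝒜 (i + 1)) ^ m ≤ ⨆ i, 𝒜 (i + m) := by
  induction m with
  | zero =>
    rw [pow_zero, Submodule.one_le]
    exact Submodule.mem_iSup_of_mem 0 (SetLike.GradedOne.one_mem (A := 𝒜))
  | succ m ih =>
    rw [pow_succ]
    refine (mul_le_mul' ih le_rfl).trans ?_
    rw [Submodule.iSup_mul]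
    refine iSup_le fun i => ?_
    rw [Submodule.mul_iSup]
    refine iSup_le fun j => Submodule.mul_le.mpr fun a ha b hb => ?_
    exact Submodule.mem_iSup_of_mem (i + j) <| by
      simpa [add_assoc, add_left_comm] using SetLike.mul_mem_graded ha hb

theorem iSup_graded_succ_pow_eq_bot {N : ℕ} (h : ∀ i, N < i → 𝒜 i = ⊥) :
    (⨆ i, 𝒜 (i + 1)) ^ (N + 1) = ⊥ :=
  le_bot_iff.mp <| (iSup_graded_succ_pow_le 𝒜 (N + 1)).trans <|
    iSup_le fun i => (h _ (by omega)).le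

end GradedMonoid

namespace ExteriorAlgebra

section CommRing

variable {R M : Type*} [CommRing R] [AddCommGroup M] [Module R M]

theorem exteriorPower_succ_le_ker_algebraMapInv (i : ℕ) :
    ⋀[R]^(i + 1) M ≤
      LinearMap.ker (algebraMapInv : ExteriorAlgebra R M →ₐ[R] R).toLinearMap := by
  rw [exteriorPower, pow_succ']
  refine Submodule.mul_le.mpr ?_
  rintro _ ⟨m, rfl⟩ y -
  simp [algebraMapInv]

theorem sub_algebraMap_algebraMapInv_mem_iSup (x : ExteriorAlgebra R M) :
    x - algebraMap R _ (algebraMapInv x) ∈ ⨆ i, ⋀[R]^(i + 1) M := by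
  induction x using DirectSum.Decomposition.inductionOn (fun i => ⋀[R]^i M) with
  | zero => simp
  | add x y hx hy =>
    convert add_mem hx hy using 1
    rw [map_add, map_add]
    abel
  | homogeneous x =>
    rename_i i
    obtain ⟨x, hx⟩ := x
    cases i with
    | zero =>
      obtain ⟨c, rfl⟩ := Submodule.mem_one.mp (by simpa using hx)
      simp [algebraMap_leftInverse M c]
    | succ i =>
      rw [show algebraMapInv x = 0 from exteriorPower_succ_le_ker_algebraMapInv i hx,
        map_zero, sub_zero]
      exact Submodule.mem_iSup_of_mem i hx

theorem ker_algebraMapInv_le_iSup :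
    LinearMap.ker (algebraMapInv : ExteriorAlgebra R M →ₐ[R] R).toLinearMap ≤
      ⨆ i, ⋀[R]^(i + 1) M := fun x hx => by
  simpa [show algebraMapInv x = 0 from hx] using sub_algebraMap_algebraMapInv_mem_iSup x

end CommRing

variable {K E : Type*} [Field K] [AddCommGroup E] [Module K E] [FiniteDimensional K E]

theorem exteriorPower_eq_bot_of_finrank_lt {n : ℕ} (h : Module.finrank K E < n) :
    ⋀[K]^n E = ⊥ := by
  rw [← Submodule.finrank_eq_zero, exteriorPower.finrank_eq, Nat.choose_eq_zero_of_lt h]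

theorem ker_algebraMapInv_pow_eq_bot :
    LinearMap.ker (algebraMapInv : ExteriorAlgebra K E →ₐ[K] K).toLinearMap ^
      (Module.finrank K E + 1) = ⊥ :=
  le_bot_iff.mp <| (pow_le_pow_left' ker_algebraMapInv_le_iSup _).trans <|
    (iSup_graded_succ_pow_eq_bot _ fun _ => exteriorPower_eq_bot_of_finrank_lt).le

end ExteriorAlgebra

namespace Algebra.TensorProduct

variable {R A B : Type*} [CommRing R] [Ring A] [Algebra R A] [CommRing B] [Algebra R B]

open Submodule in
theorem map₂_mk_mul_le (I J : Submodule R A) :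
    map₂ (TensorProduct.mk R A B) I ⊤ * map₂ (TensorProduct.mk R A B) J ⊤ ≤
      map₂ (TensorProduct.mk R A B) (I * J) ⊤ := by
  rw [map₂_eq_span_image2, map₂_eq_span_image2, span_mul_span, map₂_eq_span_image2]
  refine span_mono ?_
  rintro _ ⟨_, ⟨a, ha, y, -, rfl⟩, _, ⟨b, hb, z, -, rfl⟩, rfl⟩
  exact ⟨a * b, mul_mem_mul ha hb, y * z, trivial, (tmul_mul_tmul a b y z).symm⟩

theorem map₂_mk_pow_le (I : Submodule R A) (m : ℕ) :
    Submodule.map₂ (TensorProduct.mk R A B) I ⊤ ^ m ≤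
      Submodule.map₂ (TensorProduct.mk R A B) (I ^ m) ⊤ := by
  induction m with
  | zero =>
    rw [pow_zero, pow_zero, Submodule.one_le]
    exact Submodule.apply_mem_map₂ _ (Submodule.one_le.mp le_rfl) trivial
  | succ m ih =>
    rw [pow_succ, pow_succ]
    exact (mul_le_mul' ih le_rfl).trans (map₂_mk_mul_le _ _)

theorem commute_includeRight (b : B) (x : A ⊗[R] B) : Commute (includeRight b) x := by
  induction x using TensorProduct.induction_on with
  | zero => exact Commute.zero_right _
  | tmul a y =>
    simp only [Commute, SemiconjBy, includeRight_apply, tmul_mul_tmul, one_mul, mul_one, mul_comm]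
  | add x y hx hy => exact hx.add_right hy

noncomputable def retractIncludeRight (ε : A →ₐ[R] R) : A ⊗[R] B →ₐ[R] B :=
  productMap ((Algebra.ofId R B).comp ε) (AlgHom.id R B)

theorem retractIncludeRight_includeRight (ε : A →ₐ[R] R) (b : B) :
    retractIncludeRight ε (includeRight b) = b := by
  simp [retractIncludeRight]

theorem sub_includeRight_retractIncludeRight_mem (ε : A →ₐ[R] R) (x : A ⊗[R] B) :
    x - includeRight (retractIncludeRight ε x) ∈
      Submodule.map₂ (TensorProduct.mk R A B) (LinearMap.ker ε.toLinearMap) ⊤ := by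
  induction x using TensorProduct.induction_on with
  | zero => simp
  | tmul a y =>
    have : a ⊗ₜ[R] y - includeRight (retractIncludeRight ε (a ⊗ₜ y)) =
        (a - algebraMap R A (ε a)) ⊗ₜ y := by
      rw [retractIncludeRight, productMap_apply_tmul, includeRight_apply, sub_tmul,
        Algebra.algebraMap_eq_smul_one, smul_tmul, Algebra.smul_def]
      rfl
    rw [this]
    exact Submodule.apply_mem_map₂ _ (by simp) trivial
  | add x y hx hy =>
    convert add_mem hx hy using 1
    rw [map_add, map_add]
    abel

theorem isFIsomorphism_includeRight (p : ℕ) [Fact p.Prime] [CharP B p] (ε : A →ₐ[R] R)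
    {m : ℕ} (hε : LinearMap.ker ε.toLinearMap ^ m = ⊥) :
    IsFIsomorphism p
      ((includeRight : B →ₐ[R] A ⊗[R] B) : B →+* A ⊗[R] B) := by
  have hinj : Function.Injective (includeRight : B →ₐ[R] A ⊗[R] B) :=
    Function.LeftInverse.injective (retractIncludeRight_includeRight ε)
  have : CharP (A ⊗[R] B) p :=
    charP_of_injective_ringHom (f := ((includeRight : B →ₐ[R] A ⊗[R] B) : B →+* _)) hinj p
  refine ⟨fun b hb => ?_, fun x => ⟨m, retractIncludeRight ε x ^ p ^ m, ?_⟩⟩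
  · rw [hinj (hb.trans (map_zero _).symm)]
    exact IsNilpotent.zero
  · set n := x - includeRight (retractIncludeRight ε x)
    have hn : n ^ m = 0 := by
      have := map₂_mk_pow_le _ m
        (Submodule.pow_mem_pow _ (sub_includeRight_retractIncludeRight_mem ε x) m)
      rwa [hε, Submodule.map₂_bot_left, Submodule.mem_bot] at this
    have hnp : n ^ p ^ m = 0 :=
      pow_eq_zero_of_le (Nat.lt_pow_self (Fact.out : p.Prime).one_lt).le hn
    calc includeRight (retractIncludeRight ε x ^ p ^ m)
        = includeRight (retractIncludeRight ε x) ^ p ^ m + n ^ p ^ m := by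
          rw [map_pow, hnp, add_zero]
      _ = x ^ p ^ m := by
        rw [← add_pow_char_pow_of_commute _ _ (commute_includeRight _ _), add_sub_cancel]

end Algebra.TensorProduct

/-- for `k` a field of characteristic `p > 0` and `E` an elementary abelian
`p`-group of rank `r` inside the torus `T = (S^1)^r` (via `p`-th roots of unity), the
restriction `H^*(BT; k) → H^*(BE; k)` is an F-isomorphism.

Here the cohomology rings are given by their standard models (cf. the context):
`H^*(BT;k) = k[y_1,...,y_r]`; for `p = 2`, `H^*(BE;k) = k[a_1,...,a_r]` and `y_i ↦ a_i^2`;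
for `p` odd, `H^*(BE;k) = Λ(a_1,...,a_r) ⊗ k[y_1,...,y_r]` and `y_i ↦ 1 ⊗ y_i`. -/
theorem stmt_3 (k : Type) [Field k] (p : ℕ) [Fact p.Prime] [CharP k p] (r : ℕ) :
    (p = 2 →
      IsFIsomorphism p
        ((MvPolynomial.aeval (fun i : Fin r => (MvPolynomial.X i : MvPolynomial (Fin r) k) ^ 2) :
            MvPolynomial (Fin r) k →ₐ[k] MvPolynomial (Fin r) k) :
          MvPolynomial (Fin r) k →+* MvPolynomial (Fin r) k)) ∧
    (Odd p →
      IsFIsomorphism p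
        ((Algebra.TensorProduct.includeRight :
            MvPolynomial (Fin r) k →ₐ[k]
              (ExteriorAlgebra k (Fin r → k) ⊗[k] MvPolynomial (Fin r) k)) :
          MvPolynomial (Fin r) k →+*
            (ExteriorAlgebra k (Fin r → k) ⊗[k] MvPolynomial (Fin r) k))) := by
  refine ⟨?_, fun _ => ?_⟩
  · rintro rfl
    exact MvPolynomial.isFIsomorphism_expand 2
  · exact Algebra.TensorProduct.isFIsomorphism_includeRight p ExteriorAlgebra.algebraMapInv
      ExteriorAlgebra.ker_algebraMapInv_pow_eq_bot
end

section
/- Let R* be a graded-commutative Noetherian ring acting on a compactly generated triangulated category T, and suppose support Supp satisfies Supp(⟨Loc generated by a family⟩) = union of supports. If f*: S → T has conservative right adjoint, S is stratified, and the Avrunin–Scott identity Supp(f* s) = φ^{-1}(Supp s) holds (φ the induced map on spectra), then for any localizing ideal L of S generated by a set {s_i}, one has Supp(Loc⟨f*(L)⟩) = φ^{-1}(Supp(L)). -/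
/-- Lemma "Suppcompatibility", abstract form: given support functions on the
objects of two categories, closure operators `Loc` assigning to a set of objects the
localizing ideal it generates (with support of a generated ideal being the union of the
supports of its generators), a map `φ` on spectra, and a functor `f` satisfying the
Avrunin–Scott identity `Supp(f s) = φ⁻¹(Supp s)`, the support of the localizing ideal
generated by the image of a set-generated localizing ideal `L` equals `φ⁻¹(Supp L)`. -/
theorem stmt_11 {S T XS XT : Type*}
    (suppS : S → Set XS) (suppT : T → Set XT)
    (LocS : Set S → Set S) (LocT : Set T → Set T)
    (φ : XT → XS) (f : S → T)
    -- `Supp(Loc⟨A⟩) = ⋃_{a ∈ A} Supp(a)` in both categories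
    (hLocS : ∀ A : Set S, (⋃ a ∈ LocS A, suppS a) = ⋃ a ∈ A, suppS a)
    (hLocT : ∀ A : Set T, (⋃ t ∈ LocT A, suppT t) = ⋃ a ∈ A, suppT a)
    -- Avrunin–Scott identity, valid since `f*` has conservative right adjoint and `S` is
    -- stratified
    (hAS : ∀ s : S, suppT (f s) = φ ⁻¹' suppS s)
    -- `L` is a localizing ideal generated by a set of objects `sᵢ`
    {ι : Type*} (si : ι → S) (L : Set S) (hL : L = LocS (Set.range si)) :
    (⋃ t ∈ LocT (f '' L), suppT t) = φ ⁻¹' (⋃ l ∈ L, suppS l) := by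
  rw [hLocT, Set.biUnion_image, Set.preimage_iUnion₂]
  exact Set.iUnion₂_congr fun l _ => hAS l
end
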